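/- arXiv:2501.03934 — 4 statements merged into one kernel-verified Lean document; each statement's English description precedes it below -/
import Mathlib

section
/- Let H be a separable Hilbert space, R a unitary, and P an orthogonal projection on H with [P,R] compact. Then the operator PRP + (1-P) is Fredholm, with parametrix PR*P + (1-P). -/
open ContinuousLinearMap

private lemma compact_clm_comp {H : Type*} [NormedAddCommGroup H] [InnerProductSpace ℂ H]
    (f g : H →L[ℂ] H) (hf : IsCompactOperator ⇑f) : IsCompactOperator ⇑(g ∘L f) := by
  rw [ContinuousLinearMap.coe_comp']
  exact hf.clm_comp g

private lemma compact_comp_clm {H : Type*} [NormedAddCommGroup H] [InnerProductSpace ℂ H]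
    (f g : H →L[ℂ] H) (hf : IsCompactOperator ⇑f) : IsCompactOperator ⇑(f ∘L g) := by
  rw [ContinuousLinearMap.coe_comp']
  exact hf.comp_clm g

private lemma compact_neg_clm {H : Type*} [NormedAddCommGroup H] [InnerProductSpace ℂ H]
    (f : H →L[ℂ] H) (hf : IsCompactOperator ⇑f) : IsCompactOperator ⇑(-f) := by
  have : (⇑(-f) : H → H) = -⇑f := by ext x; simp
  rw [this]
  exact hf.neg

/-- If `P` is an orthogonal projection with `[P,R]` compact for a unitary `R`,
then `PRP + (1-P)` is Fredholm (invertible modulo compacts), with parametrix `PR*P + (1-P)`. -/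
theorem stmt1
    {H : Type*} [NormedAddCommGroup H] [InnerProductSpace ℂ H] [CompleteSpace H]
    [TopologicalSpace.SeparableSpace H]
    (R P : H →L[ℂ] H) (hR : R ∈ unitary (H →L[ℂ] H))
    (hPsa : IsSelfAdjoint P) (hPidem : IsIdempotentElem P)
    (hcomm : IsCompactOperator ⇑(P ∘L R - R ∘L P)) :
    IsCompactOperator
      ⇑(((P ∘L R ∘L P + (1 - P)) ∘L (P ∘L (star R) ∘L P + (1 - P)) - 1 : H →L[ℂ] H)) ∧
    IsCompactOperator
      ⇑(((P ∘L (star R) ∘L P + (1 - P)) ∘L (P ∘L R ∘L P + (1 - P)) - 1 : H →L[ℂ] H)) := by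
  have hP2 : ∀ x : H →L[ℂ] H, P * (P * x) = P * x := fun x => by
    rw [← mul_assoc, hPidem]
  have hRr : ∀ x : H →L[ℂ] H, R * (star R * x) = x := fun x => by
    rw [← mul_assoc, hR.2, one_mul]
  have hRl : ∀ x : H →L[ℂ] H, star R * (R * x) = x := fun x => by
    rw [← mul_assoc, hR.1, one_mul]
  have hKc : IsCompactOperator ⇑(P * R - R * P : H →L[ℂ] H) := hcomm
  constructor
  · have heq : ((P ∘L R ∘L P + (1 - P)) ∘L (P ∘L (star R) ∘L P + (1 - P)) - 1 : H →L[ℂ] H)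
        = -(P ∘L (((P * R - R * P) * (star R * P)))) := by
      change (P * R * P + (1 - P)) * (P * star R * P + (1 - P)) - 1
        = -(P * ((P * R - R * P) * (star R * P)))
      simp only [mul_sub, sub_mul, mul_add, add_mul, mul_one, one_mul, neg_mul, mul_assoc,
        hP2, hRr, hRl]
      rw [show P * P = P from hPidem]
      abel
    rw [heq]
    exact compact_neg_clm _ (compact_clm_comp _ P (compact_comp_clm _ (star R * P) hKc))
  · have heq : ((P ∘L (star R) ∘L P + (1 - P)) ∘L (P ∘L R ∘L P + (1 - P)) - 1 : H →L[ℂ] H)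
        = P ∘L ((star R * ((P * R - R * P) * P))) := by
      change (P * star R * P + (1 - P)) * (P * R * P + (1 - P)) - 1
        = P * (star R * ((P * R - R * P) * P))
      simp only [mul_sub, sub_mul, mul_add, add_mul, mul_one, one_mul, mul_assoc,
        hP2, hRr, hRl]
      rw [show P * P = P from hPidem]
      abel
    rw [heq]
    exact compact_clm_comp _ P
      (compact_clm_comp _ (star R) (compact_comp_clm _ P hKc))
end

section
/- Let A be a bounded operator on ℓ²(Z²), (ε_i) a sequence of positive reals, and (θ_i) a sequence of angles, each of which is the argument of some lattice point of Z². Then there exist points x_i ∈ Z² with arg(x_i) = θ_i and radii 0 = r_0 < r_1 < r_2 < ... such that x_i lies in the annulus B_{r_i} \ B_{r_{i-1}} and ‖Λ_{B_{r_i}^c ∪ B_{r_{i-1}}} A (δ_{x_i} ⊗ δ_{x_i}*)‖ ≤ ε_i for all i, where B_r = {x ∈ Z² : ‖x‖ < r}. -/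
open scoped Classical
open ContinuousLinearMap

/-- Argument of a lattice point, viewed as a complex number. -/
noncomputable def latticeArg (x : ℤ × ℤ) : ℝ :=
  Complex.arg ((x.1 : ℂ) + (x.2 : ℂ) * Complex.I)

/-- Euclidean norm of a lattice point. -/
noncomputable def latticeAbs (x : ℤ × ℤ) : ℝ :=
  ‖((x.1 : ℂ) + (x.2 : ℂ) * Complex.I)‖

/-- Open ball of radius `r` in the lattice `ℤ²`. -/
noncomputable def latticeBall (r : ℝ) : Set (ℤ × ℤ) := {x | latticeAbs x < r}

/-- Any lattice ball is a finite set. -/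
lemma latticeBall_finite (R : ℝ) : (latticeBall R).Finite := by
  apply Set.Finite.subset ((Set.finite_Icc (-⌈R⌉) ⌈R⌉).prod (Set.finite_Icc (-⌈R⌉) ⌈R⌉))
  rintro ⟨a, b⟩ h
  have h' : latticeAbs (a, b) < R := h
  have hre : |(a : ℝ)| ≤ latticeAbs (a, b) := by
    have := Complex.abs_re_le_norm ((a : ℂ) + (b : ℂ) * Complex.I)
    simpa [latticeAbs] using this
  have him : |(b : ℝ)| ≤ latticeAbs (a, b) := by
    have := Complex.abs_im_le_norm ((a : ℂ) + (b : ℂ) * Complex.I)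
    simpa [latticeAbs] using this
  have ha : |a| ≤ ⌈R⌉ := by
    have : ((|a| : ℤ) : ℝ) < (⌈R⌉ : ℝ) := by
      rw [Int.cast_abs]
      exact lt_of_le_of_lt hre (lt_of_lt_of_le h' (Int.le_ceil R))
    exact le_of_lt (by exact_mod_cast this)
  have hb : |b| ≤ ⌈R⌉ := by
    have : ((|b| : ℤ) : ℝ) < (⌈R⌉ : ℝ) := by
      rw [Int.cast_abs]
      exact lt_of_le_of_lt him (lt_of_lt_of_le h' (Int.le_ceil R))
    exact le_of_lt (by exact_mod_cast this)
  constructor <;> simp only [Set.mem_Icc] <;> constructor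
  · linarith [(abs_le.1 ha).1]
  · exact (abs_le.1 ha).2
  · linarith [(abs_le.1 hb).1]
  · exact (abs_le.1 hb).2

/-- Given a bounded operator `A` on ℓ²(ℤ²), positive numbers `ε i` and
angles `θ i` (each attained by lattice points of arbitrarily large norm), there are
centers `x i` with `arg (x i) = θ i` and radii `0 = r 0 < r 1 < ⋯` with
`x i ∈ B_{r (i+1)} \ B_{r i}` and `‖Λ_{B_{r(i+1)}ᶜ ∪ B_{r i}} A (δ_{x i} ⊗ δ_{x i}^*)‖ ≤ ε i`.
(The index `i : ℕ` plays the role of `i+1` in the 1-based statement.) -/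
theorem stmt4
    {H : Type*} [NormedAddCommGroup H] [InnerProductSpace ℂ H] [CompleteSpace H]
    (e : HilbertBasis (ℤ × ℤ) ℂ H)
    (Λ : Set (ℤ × ℤ) → (H →L[ℂ] H))
    (hΛsa : ∀ S, IsSelfAdjoint (Λ S))
    (hΛ : ∀ S x, (Λ S) (e x) = if x ∈ S then e x else 0)
    (A : H →L[ℂ] H)
    (ε : ℕ → ℝ) (hε : ∀ i, 0 < ε i)
    (θ : ℕ → ℝ)
    (hθ : ∀ i, ∀ R : ℝ, ∃ x : ℤ × ℤ, R < latticeAbs x ∧ latticeArg x = θ i) :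
    ∃ (x : ℕ → ℤ × ℤ) (r : ℕ → ℝ), r 0 = 0 ∧ StrictMono r ∧
      (∀ i, latticeArg (x i) = θ i) ∧
      (∀ i, r i ≤ latticeAbs (x i) ∧ latticeAbs (x i) < r (i + 1)) ∧
      (∀ i, ‖Λ ((latticeBall (r (i + 1)))ᶜ ∪ latticeBall (r i)) ∘L A ∘L
          ((innerSL ℂ (e (x i))).smulRight (e (x i)))‖ ≤ ε i) := by
  classical
  -- coefficients of Λ S v
  have hcoef : ∀ (S : Set (ℤ × ℤ)) (v : H) (y : ℤ × ℤ),
      e.repr (Λ S v) y = if y ∈ S then e.repr v y else 0 := by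
    intro S v y
    have h1 := (hΛsa S).isSymmetric (e y) v
    simp only [ContinuousLinearMap.coe_coe] at h1
    rw [e.repr_apply_apply, ← h1, hΛ]
    split_ifs with h
    · rw [e.repr_apply_apply]
    · simp
  -- summability of squared coefficients
  have hsum : ∀ v : H, Summable (fun y => ‖e.repr v y‖ ^ 2) := by
    intro v
    have h := (lp.memℓp (e.repr v)).summable (p := 2) (by norm_num)
    have h2 : (2 : ENNReal).toReal = ((2 : ℕ) : ℝ) := by norm_num
    simpa [h2, Real.rpow_natCast] using h
  have hnn : ∀ (v : H) (y : ℤ × ℤ), 0 ≤ ‖e.repr v y‖ ^ 2 := fun v y => by positivity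
  -- Parseval for Λ S v
  have hnormsq : ∀ (S : Set (ℤ × ℤ)) (v : H),
      ‖Λ S v‖ ^ 2 = ∑' y, Set.indicator S (fun y => ‖e.repr v y‖ ^ 2) y := by
    intro S v
    have h0 : ‖Λ S v‖ = ‖e.repr (Λ S v)‖ := (e.repr.norm_map _).symm
    have h1 := lp.norm_rpow_eq_tsum (p := 2) (by norm_num) (e.repr (Λ S v))
    have h2 : (2 : ENNReal).toReal = ((2 : ℕ) : ℝ) := by norm_num
    rw [h2] at h1
    simp only [Real.rpow_natCast] at h1
    rw [h0, h1]
    congr 1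
    funext y
    rw [hcoef S v y, Set.indicator_apply]
    split_ifs with h
    · rfl
    · simp
  -- union bound
  have hunion : ∀ (S T : Set (ℤ × ℤ)) (v : H),
      ‖Λ (S ∪ T) v‖ ^ 2 ≤ ‖Λ S v‖ ^ 2 + ‖Λ T v‖ ^ 2 := by
    intro S T v
    rw [hnormsq, hnormsq, hnormsq, ← Summable.tsum_add ((hsum v).indicator S) ((hsum v).indicator T)]
    refine Summable.tsum_le_tsum ?_ (((hsum v).indicator (S ∪ T))) (((hsum v).indicator S).add
      ((hsum v).indicator T))
    intro y
    by_cases hS : y ∈ S <;> by_cases hT : y ∈ T <;>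
      simp [Set.indicator_apply, hS, hT, hnn v y]
  -- decay of coefficients of A (e x)
  have hdecay : ∀ y : ℤ × ℤ,
      Filter.Tendsto (fun x : ℤ × ℤ => ‖e.repr (A (e x)) y‖ ^ 2) Filter.cofinite (nhds 0) := by
    intro y
    have key : ∀ x : ℤ × ℤ,
        ‖e.repr (A (e x)) y‖ = ‖e.repr (ContinuousLinearMap.adjoint A (e y)) x‖ := by
      intro x
      rw [e.repr_apply_apply, e.repr_apply_apply, ← ContinuousLinearMap.adjoint_inner_left,
        norm_inner_symm]
    simp only [key]
    exact (hsum _).tendsto_cofinite_zero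
  -- finite sets give small projections for large x
  have hfin_small : ∀ S : Set (ℤ × ℤ), S.Finite →
      Filter.Tendsto (fun x : ℤ × ℤ => ‖Λ S (A (e x))‖ ^ 2) Filter.cofinite (nhds 0) := by
    intro S hS
    have heq : ∀ x : ℤ × ℤ,
        ‖Λ S (A (e x))‖ ^ 2 = ∑ y ∈ hS.toFinset, ‖e.repr (A (e x)) y‖ ^ 2 := by
      intro x
      rw [hnormsq]
      rw [tsum_eq_sum (s := hS.toFinset)
        (fun y hy => Set.indicator_of_notMem (fun h => hy (hS.mem_toFinset.mpr h)) _)]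
      exact Finset.sum_congr rfl fun y hy => Set.indicator_of_mem (hS.mem_toFinset.mp hy) _
    simp only [heq]
    have h := tendsto_finset_sum hS.toFinset (fun y _ => hdecay y)
    simpa using h
  -- tail bound
  have htail : ∀ (v : H) (δ : ℝ), 0 < δ →
      ∃ R0 : ℝ, ∀ r ≥ R0, ‖Λ (latticeBall r)ᶜ v‖ ^ 2 < δ := by
    intro v δ hδ
    have htt := tendsto_tsum_compl_atTop_zero (f := fun y : ℤ × ℤ => ‖e.repr v y‖ ^ 2)
    obtain ⟨s0, hs0⟩ := ((tendsto_order.1 htt).2 δ hδ).exists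
    obtain ⟨M, hM⟩ := ((s0 : Set (ℤ × ℤ)).toFinite.image latticeAbs).bddAbove
    refine ⟨M + 1, fun r hr => ?_⟩
    have hsub : (latticeBall r)ᶜ ⊆ {y : ℤ × ℤ | y ∉ s0} := by
      intro y hy hys0
      exact hy (show latticeAbs y < r from
        lt_of_le_of_lt (hM (Set.mem_image_of_mem latticeAbs (by exact_mod_cast hys0)))
          (lt_of_lt_of_le (lt_add_one M) hr))
    have h1 : (∑' (b : ↑{y : ℤ × ℤ | y ∉ s0}), ‖e.repr v (b : ℤ × ℤ)‖ ^ 2)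
        = ∑' y, Set.indicator {y : ℤ × ℤ | y ∉ s0} (fun y => ‖e.repr v y‖ ^ 2) y :=
      tsum_subtype {y : ℤ × ℤ | y ∉ s0} (fun y => ‖e.repr v y‖ ^ 2)
    calc ‖Λ (latticeBall r)ᶜ v‖ ^ 2
        = ∑' y, Set.indicator (latticeBall r)ᶜ (fun y => ‖e.repr v y‖ ^ 2) y := hnormsq _ v
      _ ≤ ∑' y, Set.indicator {y : ℤ × ℤ | y ∉ s0} (fun y => ‖e.repr v y‖ ^ 2) y := by
          refine Summable.tsum_le_tsum (fun y => Set.indicator_le_indicator_of_subset hsub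
            (fun y => hnn v y) y) ((hsum v).indicator _) ((hsum v).indicator _)
      _ = ∑' (b : ↑{y : ℤ × ℤ | y ∉ s0}), ‖e.repr v (b : ℤ × ℤ)‖ ^ 2 := h1.symm
      _ < δ := hs0
  -- operator norm bound via rank one
  have hopnorm : ∀ (S : Set (ℤ × ℤ)) (x : ℤ × ℤ),
      ‖Λ S ∘L A ∘L ((innerSL ℂ (e x)).smulRight (e x))‖ ≤ ‖Λ S (A (e x))‖ := by
    intro S x
    refine ContinuousLinearMap.opNorm_le_bound _ (norm_nonneg _) (fun v => ?_)
    have h1 : (Λ S ∘L A ∘L ((innerSL ℂ (e x)).smulRight (e x))) v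
        = (innerSL ℂ (e x) v) • (Λ S (A (e x))) := by
      simp [ContinuousLinearMap.smulRight_apply, map_smul]
    rw [h1, norm_smul]
    have h2 : ‖innerSL ℂ (e x) v‖ ≤ ‖v‖ := by
      have h3 := norm_inner_le_norm (𝕜 := ℂ) (e x) v
      have h4 : ‖e x‖ = 1 := e.orthonormal.1 x
      simpa [h4] using h3
    rw [mul_comm]
    exact mul_le_mul_of_nonneg_left h2 (norm_nonneg _)
  -- the recursive step
  have step : ∀ (i : ℕ) (ri : ℝ), ∃ p : (ℤ × ℤ) × ℝ,
      latticeArg p.1 = θ i ∧ ri ≤ latticeAbs p.1 ∧ latticeAbs p.1 < p.2 ∧ ri < p.2 ∧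
      ‖Λ ((latticeBall p.2)ᶜ ∪ latticeBall ri) ∘L A ∘L
        ((innerSL ℂ (e p.1)).smulRight (e p.1))‖ ≤ ε i := by
    intro i ri
    have hδ : 0 < (ε i / 2) ^ 2 := pow_pos (by linarith [hε i]) 2
    have hcof := hfin_small (latticeBall ri) (latticeBall_finite ri)
    have hev : ∀ᶠ x in Filter.cofinite, ‖Λ (latticeBall ri) (A (e x))‖ ^ 2 < (ε i / 2) ^ 2 :=
      (tendsto_order.1 hcof).2 _ hδ
    have hfinC := Filter.eventually_cofinite.mp hev
    obtain ⟨M, hM⟩ := (hfinC.image latticeAbs).bddAbove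
    obtain ⟨x0, hx0abs, hx0arg⟩ := hθ i (max ri M)
    have hx0good : ‖Λ (latticeBall ri) (A (e x0))‖ ^ 2 < (ε i / 2) ^ 2 := by
      by_contra hcon
      exact absurd (hM (Set.mem_image_of_mem latticeAbs hcon))
        (not_le.mpr (lt_of_le_of_lt (le_max_right ri M) hx0abs))
    have hrix : ri ≤ latticeAbs x0 := le_of_lt (lt_of_le_of_lt (le_max_left ri M) hx0abs)
    obtain ⟨R0, hR0⟩ := htail (A (e x0)) ((ε i / 2) ^ 2) hδ
    set r' := max R0 (latticeAbs x0 + 1) with hr'def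
    have hxr' : latticeAbs x0 < r' :=
      lt_of_lt_of_le (lt_add_one _) (le_max_right R0 (latticeAbs x0 + 1))
    refine ⟨(x0, r'), hx0arg, hrix, hxr', lt_of_le_of_lt hrix hxr', ?_⟩
    have htail' : ‖Λ (latticeBall r')ᶜ (A (e x0))‖ ^ 2 < (ε i / 2) ^ 2 :=
      hR0 r' (le_max_left R0 (latticeAbs x0 + 1))
    have hu := hunion (latticeBall r')ᶜ (latticeBall ri) (A (e x0))
    have hsq : ‖Λ ((latticeBall r')ᶜ ∪ latticeBall ri) (A (e x0))‖ ^ 2 ≤ (ε i) ^ 2 := by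
      nlinarith [hε i]
    have hnle : ‖Λ ((latticeBall r')ᶜ ∪ latticeBall ri) (A (e x0))‖ ≤ ε i :=
      le_of_pow_le_pow_left₀ two_ne_zero (le_of_lt (hε i)) hsq
    exact le_trans (hopnorm _ x0) hnle
  -- build the sequences by recursion
  let F : ℕ → ℝ → (ℤ × ℤ) × ℝ := fun i ri => Classical.choose (step i ri)
  let r : ℕ → ℝ := fun n => Nat.rec (motive := fun _ => ℝ) 0 (fun i ri => (F i ri).2) n
  let x : ℕ → ℤ × ℤ := fun n => (F n (r n)).1
  have hrsucc : ∀ n, r (n + 1) = (F n (r n)).2 := fun n => rfl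
  have hspec : ∀ n, latticeArg (x n) = θ n ∧ r n ≤ latticeAbs (x n) ∧
      latticeAbs (x n) < (F n (r n)).2 ∧ r n < (F n (r n)).2 ∧
      ‖Λ ((latticeBall (F n (r n)).2)ᶜ ∪ latticeBall (r n)) ∘L A ∘L
        ((innerSL ℂ (e (x n))).smulRight (e (x n)))‖ ≤ ε n :=
    fun n => Classical.choose_spec (step n (r n))
  refine ⟨x, r, rfl, ?_, fun n => (hspec n).1, fun n => ⟨(hspec n).2.1, ?_⟩, fun n => ?_⟩
  · refine strictMono_nat_of_lt_succ (fun n => ?_)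
    rw [hrsucc n]
    exact (hspec n).2.2.2.1
  · rw [hrsucc n]
    exact (hspec n).2.2.1
  · rw [hrsucc n]
    exact (hspec n).2.2.2.2
end

section
/- Let A be a unital C*-algebra, P ∈ A a projection, and U ∈ A a unitary with U = P + (1−P)U(1−P). Suppose there exist n ∈ ℕ, a homotopy of unitaries in M_{n+1}(A) from U ⊕ 1_n to 1_{n+1}, and a partial isometry T ∈ M_{1,n+1}(A) with T*T = P ⊕ 1_n and TT* = P. Then U is homotopic to 1 within the unitary group of A. -/
open scoped Matrix
open Set

/-- Let `A` be a unital C*-algebra, `P ∈ A` a projection, `U ∈ A` a unitary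
with `U = P + (1−P)U(1−P)`.  If `U ⊕ 1_n` is homotopic to `1_{n+1}` through unitaries of
`M_{n+1}(A)` and there is a partial isometry `T ∈ M_{1,n+1}(A)` with `T*T = P ⊕ 1_n` and
`TT* = P`, then `U` is homotopic to `1` within the unitary group of `A`. -/
theorem stmt7
    {A : Type*} [NormedRing A] [StarRing A] [CStarRing A] [NormedAlgebra ℂ A]
    [CompleteSpace A] [StarModule ℂ A]
    (P U : A)
    (hPsa : IsSelfAdjoint P) (hPidem : IsIdempotentElem P)
    (hU : U ∈ unitary A)
    (hUform : U = P + (1 - P) * U * (1 - P))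
    (n : ℕ)
    (W : ℝ → Matrix (Fin (n + 1)) (Fin (n + 1)) A)
    (hWcont : ContinuousOn W (Icc (0 : ℝ) 1))
    (hWuni : ∀ t ∈ Icc (0 : ℝ) 1, W t ∈ unitary (Matrix (Fin (n + 1)) (Fin (n + 1)) A))
    (hW0 : W 0 = Matrix.diagonal (fun i => if i = 0 then U else 1))
    (hW1 : W 1 = 1)
    (T : Matrix (Fin 1) (Fin (n + 1)) A)
    (hT1 : Tᴴ * T = Matrix.diagonal (fun i => if i = 0 then P else 1))
    (hT2 : (T * Tᴴ) 0 0 = P) :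
    ∃ Z : ℝ → A, ContinuousOn Z (Icc (0 : ℝ) 1) ∧
      (∀ t ∈ Icc (0 : ℝ) 1, Z t ∈ unitary A) ∧ Z 0 = 1 ∧ Z 1 = U := by
  letI : CStarAlgebra A := { }
  have hP1 : P * P = P := hPidem
  have hps : star (1 - P) = 1 - P := by rw [star_sub, star_one, hPsa.star_eq]
  have hP1P : P * (1 - P) = 0 := by rw [mul_sub, mul_one, hP1, sub_self]
  have h1PP : (1 - P) * P = 0 := by rw [sub_mul, one_mul, hP1, sub_self]
  have h1P1P : (1 - P) * (1 - P) = 1 - P := by rw [mul_sub, mul_one, h1PP, sub_zero]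
  have hSAC : (1 : A) - P + P = 1 := by abel
  -- entrywise consequences of hT1, hT2
  have hTT : ∀ j k : Fin (n + 1),
      star (T 0 j) * T 0 k = if j = k then (if j = 0 then P else 1) else 0 := by
    intro j k
    have h := congrFun (congrFun hT1 j) k
    simpa [Matrix.mul_apply, Matrix.conjTranspose_apply, Matrix.diagonal_apply,
      Fin.sum_univ_one] using h
  have hTT2 : ∑ k, T 0 k * star (T 0 k) = P := by
    simpa [Matrix.mul_apply, Matrix.conjTranspose_apply] using hT2
  -- `T 0 0 * (1 - P) = 0`
  have hA : T 0 0 * (1 - P) = 0 := by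
    have h0 : star (T 0 0) * T 0 0 = P := by simpa using hTT 0 0
    have key : star (T 0 0 * (1 - P)) * (T 0 0 * (1 - P)) = 0 := by
      rw [star_mul, hps, mul_assoc, ← mul_assoc (star (T 0 0)), h0, hP1P, mul_zero]
    exact (CStarRing.star_mul_self_eq_zero_iff _).mp key
  have hstarA : (1 - P) * star (T 0 0) = 0 := by
    have := congrArg star hA
    simpa [star_mul, hps] using this
  -- `(1 - P) * T 0 k = 0` for every `k`
  have hB : ∀ k, (1 - P) * T 0 k = 0 := by
    letI := CStarAlgebra.spectralOrder A
    haveI := CStarAlgebra.spectralOrderedRing A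
    have hsum : ∑ k, ((1 - P) * T 0 k) * star ((1 - P) * T 0 k) = 0 := by
      have hterm : ∀ k, ((1 - P) * T 0 k) * star ((1 - P) * T 0 k)
          = (1 - P) * (T 0 k * star (T 0 k)) * (1 - P) := by
        intro k
        rw [star_mul, hps]
        simp only [mul_assoc]
      calc ∑ k, ((1 - P) * T 0 k) * star ((1 - P) * T 0 k)
          = ∑ k, (1 - P) * (T 0 k * star (T 0 k)) * (1 - P) :=
            Finset.sum_congr rfl fun k _ => hterm k
        _ = (1 - P) * (∑ k, T 0 k * star (T 0 k)) * (1 - P) := by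
            rw [Finset.mul_sum, Finset.sum_mul]
        _ = 0 := by rw [hTT2, h1PP, zero_mul]
    intro k
    have hnn : ∀ k ∈ Finset.univ,
        (0 : A) ≤ ((1 - P) * T 0 k) * star ((1 - P) * T 0 k) := fun k _ =>
      mul_star_self_nonneg _
    have := (Finset.sum_eq_zero_iff_of_nonneg hnn).mp hsum k (Finset.mem_univ k)
    exact (CStarRing.mul_star_self_eq_zero_iff _).mp this
  have hBstar : ∀ k, star (T 0 k) * (1 - P) = 0 := by
    intro k
    have := congrArg star (hB k)
    simpa [star_mul, hps] using this
  have hT00P : T 0 0 * P = T 0 0 := by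
    have h := hA
    rw [mul_sub, mul_one, sub_eq_zero] at h
    exact h.symm
  have hPU : P * U = P := by
    rw [hUform, mul_add, hP1, ← mul_assoc, ← mul_assoc, hP1P, zero_mul, zero_mul, add_zero]
  have hT00U : T 0 0 * U = T 0 0 := by
    rw [← hT00P, mul_assoc, hPU, hT00P]
  have hU1P : (1 - P) * U = (1 - P) * U * (1 - P) := by
    nth_rw 1 [hUform]
    rw [mul_add, h1PP, zero_add, ← mul_assoc, ← mul_assoc, h1P1P]
  have h1PU : (1 - P) * U * star (T 0 0) = 0 := by
    rw [hU1P, mul_assoc ((1 - P) * U), hstarA, mul_zero]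
  -- the row `V`
  set V : Matrix (Fin 1) (Fin (n + 1)) A :=
    Matrix.of (fun _ k => (if k = 0 then 1 - P else 0) + T 0 k) with hVdef
  have hVapp : ∀ k, V 0 k = (if k = 0 then 1 - P else 0) + T 0 k := fun k => rfl
  have hVstar : ∀ k, star (V 0 k) = (if k = 0 then 1 - P else 0) + star (T 0 k) := by
    intro k
    rw [hVapp, star_add]
    congr 1
    split <;> simp [hps]
  -- V * Vᴴ = 1
  have hVV : V * Vᴴ = 1 := by
    ext i j
    have hi : i = 0 := Subsingleton.elim i 0
    have hj : j = 0 := Subsingleton.elim j 0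
    subst hi; subst hj
    rw [Matrix.mul_apply]
    have hterm : ∀ k, V 0 k * (Vᴴ) k 0
        = (if k = 0 then 1 - P else 0) + T 0 k * star (T 0 k) := by
      intro k
      rw [Matrix.conjTranspose_apply, hVstar, hVapp]
      by_cases hk : k = 0
      · subst hk
        simp only [eq_self_iff_true, if_true]
        rw [add_mul, mul_add, mul_add, h1P1P, hstarA, hA, add_zero, zero_add]
      · simp [hk]
    rw [Finset.sum_congr rfl fun k _ => hterm k, Finset.sum_add_distrib, hTT2]
    simp [Matrix.one_apply, hSAC]
  -- Vᴴ * V = 1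
  have hV'V : Vᴴ * V = 1 := by
    ext j k
    rw [Matrix.mul_apply, Fin.sum_univ_one, Matrix.conjTranspose_apply, hVstar, hVapp]
    rw [add_mul, mul_add, mul_add, hTT]
    have e1 : (if j = 0 then 1 - P else 0) * T 0 k = 0 := by
      split
      · exact hB k
      · exact zero_mul _
    have e2 : star (T 0 j) * (if k = 0 then 1 - P else 0) = 0 := by
      split
      · exact hBstar j
      · exact mul_zero _
    rw [e1, e2, add_zero, zero_add, Matrix.one_apply]
    by_cases hj : j = 0 <;> by_cases hk : k = 0
    · subst hj; subst hk
      simp [h1P1P, hSAC]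
    · subst hj
      simp [hk, Ne.symm hk]
    · subst hk
      simp [hj]
    · by_cases hjk : j = k <;> simp [hj, hk, hjk]
  -- entry-00 multiplication for 1×1 matrices
  have hmul11 : ∀ X Y : Matrix (Fin 1) (Fin 1) A, (X * Y) 0 0 = X 0 0 * Y 0 0 := by
    intro X Y
    rw [Matrix.mul_apply, Fin.sum_univ_one]
  -- conjugation preserves unitarity at the level of the 00 entry
  have hconj : ∀ M : Matrix (Fin (n + 1)) (Fin (n + 1)) A,
      M ∈ unitary (Matrix (Fin (n + 1)) (Fin (n + 1)) A) →
      (V * M * Vᴴ) 0 0 ∈ unitary A := by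
    intro M hM
    have hM1 : Mᴴ * M = 1 := by
      have := (Unitary.mem_iff.mp hM).1
      rwa [Matrix.star_eq_conjTranspose] at this
    have hM2 : M * Mᴴ = 1 := by
      have := (Unitary.mem_iff.mp hM).2
      rwa [Matrix.star_eq_conjTranspose] at this
    have hstarZ : star ((V * M * Vᴴ) 0 0) = (V * Mᴴ * Vᴴ) 0 0 := by
      rw [← Matrix.conjTranspose_apply]
      congr 1
      rw [Matrix.conjTranspose_mul, Matrix.conjTranspose_mul,
        Matrix.conjTranspose_conjTranspose, Matrix.mul_assoc]
    have key : ∀ M₁ M₂ : Matrix (Fin (n + 1)) (Fin (n + 1)) A, M₁ * M₂ = 1 →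
        (V * M₁ * Vᴴ) * (V * M₂ * Vᴴ) = 1 := by
      intro M₁ M₂ h12
      calc (V * M₁ * Vᴴ) * (V * M₂ * Vᴴ)
          = V * (M₁ * ((Vᴴ * V) * (M₂ * Vᴴ))) := by
            simp only [Matrix.mul_assoc]
        _ = V * (M₁ * (M₂ * Vᴴ)) := by rw [hV'V, Matrix.one_mul]
        _ = (V * (M₁ * M₂)) * Vᴴ := by simp only [Matrix.mul_assoc]
        _ = 1 := by rw [h12, Matrix.mul_one, hVV]
    rw [Unitary.mem_iff, hstarZ, ← hmul11, ← hmul11]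
    constructor
    · rw [key _ _ hM1, Matrix.one_apply_eq]
    · rw [key _ _ hM2, Matrix.one_apply_eq]
  -- the homotopy
  refine ⟨fun t => (V * W (1 - t) * Vᴴ) 0 0, ?_, ?_, ?_, ?_⟩
  · -- continuity
    have hg : Continuous (fun M : Matrix (Fin (n + 1)) (Fin (n + 1)) A =>
        (V * M * Vᴴ) 0 0) :=
      ((continuous_const.matrix_mul continuous_id).matrix_mul continuous_const).matrix_elem 0 0
    have hmaps : MapsTo (fun t : ℝ => 1 - t) (Icc (0 : ℝ) 1) (Icc (0 : ℝ) 1) := by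
      intro t ht
      obtain ⟨h0, h1⟩ := ht
      exact ⟨show (0:ℝ) ≤ 1 - t by linarith, show (1:ℝ) - t ≤ 1 by linarith⟩
    have hWc : ContinuousOn (fun t : ℝ => W (1 - t)) (Icc (0 : ℝ) 1) :=
      hWcont.comp ((continuous_const.sub continuous_id).continuousOn) hmaps
    exact hg.comp_continuousOn hWc
  · -- unitarity
    intro t ht
    obtain ⟨h0, h1⟩ := ht
    exact hconj _ (hWuni (1 - t) ⟨show (0:ℝ) ≤ 1 - t by linarith, show (1:ℝ) - t ≤ 1 by linarith⟩)
  · -- value at 0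
    show (V * W (1 - 0) * Vᴴ) 0 0 = 1
    rw [show (1 : ℝ) - 0 = 1 by norm_num, hW1, Matrix.mul_one, hVV, Matrix.one_apply_eq]
  · -- value at 1
    show (V * W (1 - 1) * Vᴴ) 0 0 = U
    rw [show (1 : ℝ) - 1 = 0 by norm_num, hW0]
    rw [Matrix.mul_apply]
    have hterm : ∀ k, (V * Matrix.diagonal (fun i : Fin (n + 1) => if i = 0 then U else 1)) 0 k * (Vᴴ) k 0
        = (if k = 0 then (1 - P) * U * (1 - P) else 0) + T 0 k * star (T 0 k) := by
      intro k
      rw [Matrix.mul_diagonal, Matrix.conjTranspose_apply, hVstar, hVapp]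
      by_cases hk : k = 0
      · subst hk
        simp only [eq_self_iff_true, if_true]
        rw [add_mul, add_mul, mul_add, mul_add, hT00U, h1PU, hA, add_zero, zero_add]
      · simp [hk]
    rw [Finset.sum_congr rfl fun k _ => hterm k, Finset.sum_add_distrib, hTT2]
    simp only [Finset.sum_ite_eq', Finset.mem_univ, if_true]
    rw [add_comm, ← hUform]
end

section
/- Let R be the bilateral right shift on ℓ²(Z) and Λ = Σ_{x≥1} δ_x ⊗ δ_x* the projection onto the nonnegative-shifted half-line. If f : S¹ → ℂ is continuous and Λ f(R) Λ is a compact operator, then f = 0. -/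
/-!
Since `f(R)` commutes with the unitary shift `R`, its matrix `⟪δₘ, f(R) δₙ⟫` is constant along
diagonals. For `m, n ≥ 1` the compression `Λ f(R) Λ` has the same entries, and a compact operator
sends the orthonormal sequence `δₙ₊ₖ` to a sequence whose inner products with the weakly null
sequence `δₘ₊ₖ` tend to `0`. Hence every diagonal of `f(R)` vanishes, `f(R) = 0`, and injectivity
of the continuous functional calculus gives `f = 0` on the spectrum of `R`, the unit circle.
-/

open ContinuousLinearMap
open scoped InnerProductSpace
open Filter Topology

section

variable {𝕜 E F : Type*} [RCLike 𝕜] [NormedAddCommGroup E] [InnerProductSpace 𝕜 E]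
  [NormedAddCommGroup F] [InnerProductSpace 𝕜 F]

theorem Orthonormal.tendsto_inner_cofinite {ι : Type*} {v : ι → E} (hv : Orthonormal 𝕜 v)
    (x : E) : Tendsto (fun i => ⟪v i, x⟫_𝕜) cofinite (𝓝 0) := by
  have h := (Real.continuous_sqrt.tendsto 0).comp
    (hv.inner_products_summable (x := x)).tendsto_cofinite_zero
  rw [Real.sqrt_zero] at h
  refine tendsto_zero_iff_norm_tendsto_zero.mpr (h.congr fun i => ?_)
  simp [Real.sqrt_sq (norm_nonneg _)]

theorem IsCompactOperator.tendsto_inner_apply {K : E →L[𝕜] F} (hK : IsCompactOperator K)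
    {ι : Type*} {l : Filter ι} [l.IsCountablyGenerated] {u : ι → E}
    (hu : Bornology.IsBounded (Set.range u)) {w : ι → F} {C : ℝ} (hwC : ∀ i, ‖w i‖ ≤ C)
    (hw : ∀ y, Tendsto (fun i => ⟪w i, y⟫_𝕜) l (𝓝 0)) :
    Tendsto (fun i => ⟪w i, K (u i)⟫_𝕜) l (𝓝 0) := by
  obtain ⟨S, hS, hKS⟩ := hK.image_subset_compact_of_bounded (f := (K : E →ₗ[𝕜] F)) hu
  refine tendsto_of_subseq_tendsto fun ns hns => ?_
  obtain ⟨y, -, φ, hφ, hy⟩ :=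
    hS.tendsto_subseq (x := fun k => K (u (ns k))) fun k => hKS ⟨u (ns k), ⟨ns k, rfl⟩, rfl⟩
  refine ⟨φ, ?_⟩
  have hdist : Tendsto (fun k => ⟪w (ns (φ k)), K (u (ns (φ k))) - y⟫_𝕜) atTop (𝓝 0) := by
    refine squeeze_zero_norm (fun k => (norm_inner_le_norm _ _).trans
      (mul_le_mul_of_nonneg_right (hwC _) (norm_nonneg _))) ?_
    simpa using (tendsto_iff_norm_sub_tendsto_zero.mp hy).const_mul C
  simpa [inner_sub_right] using hdist.add ((hw y).comp (hns.comp hφ.tendsto_atTop))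

theorem inner_apply_add_nat_of_commute {R T : E →L[𝕜] E} (hR : ∀ x y, ⟪R x, R y⟫_𝕜 = ⟪x, y⟫_𝕜)
    (hTR : Commute T R) {e : ℤ → E} (hshift : ∀ n, R (e n) = e (n + 1)) (m n : ℤ) (k : ℕ) :
    ⟪e (m + k), T (e (n + k))⟫_𝕜 = ⟪e m, T (e n)⟫_𝕜 := by
  induction k with
  | zero => simp
  | succ k ih =>
    push_cast
    rw [← add_assoc, ← add_assoc, ← hshift, ← hshift, ← mul_apply_eq_comp, hTR.eq,
      mul_apply_eq_comp, hR, ih]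

theorem IsSelfAdjoint.inner_comp_comp_apply [CompleteSpace E] {P : E →L[𝕜] E}
    (hP : IsSelfAdjoint P) (T : E →L[𝕜] E) {x y : E} (hx : P x = x) (hy : P y = y) :
    ⟪y, (P ∘L T ∘L P) x⟫_𝕜 = ⟪y, T x⟫_𝕜 := by
  rw [comp_apply, comp_apply, hx]
  simpa [hy] using (hP.isSymmetric y (T x)).symm

theorem HilbertBasis.eq_zero_of_inner_apply_eq_zero {ι κ : Type*} (b : HilbertBasis ι 𝕜 E)
    (b' : HilbertBasis κ 𝕜 F) {T : E →L[𝕜] F} (h : ∀ m n, ⟪b' m, T (b n)⟫_𝕜 = 0) : T = 0 := by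
  refine ext_on (Submodule.dense_iff_topologicalClosure_eq_top.mpr b.dense_span) ?_
  rintro _ ⟨n, rfl⟩
  refine b'.repr.injective ?_
  ext m
  simp [b'.repr_apply_apply, h]

end

/-- Let `R` be the bilateral right shift on ℓ²(ℤ) and `Λ` the projection
onto `span{δ_x : x ≥ 1}`.  If `f` is continuous on the unit circle (the spectrum of `R`)
and `Λ f(R) Λ` is compact, then `f` vanishes on the unit circle. -/
theorem stmt11
    {H : Type*} [NormedAddCommGroup H] [InnerProductSpace ℂ H] [CompleteSpace H]
    (e : HilbertBasis ℤ ℂ H)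
    (R : H →L[ℂ] H) (hR : R ∈ unitary (H →L[ℂ] H))
    (hshift : ∀ x : ℤ, R (e x) = e (x + 1))
    (hspec : spectrum ℂ R = Metric.sphere (0 : ℂ) 1)
    (Λ : H →L[ℂ] H) (hΛsa : IsSelfAdjoint Λ)
    (hΛ : ∀ x : ℤ, Λ (e x) = if 1 ≤ x then e x else 0)
    (f : ℂ → ℂ) (hf : ContinuousOn f (Metric.sphere (0 : ℂ) 1))
    (hcpt : IsCompactOperator ⇑(Λ ∘L cfc f R ∘L Λ)) :
    ∀ z ∈ Metric.sphere (0 : ℂ) 1, f z = 0 := by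
  set T := cfc f R
  have hTR : Commute T R := (Commute.refl R).cfc (isStarNormal_of_mem_unitary hR).star_comm_self f
  have hnorm : ∀ n, ‖e n‖ = 1 := e.orthonormal.1
  have hentry : ∀ m n : ℤ, ⟪e m, T (e n)⟫_ℂ = 0 := by
    intro m n
    have hlim : Tendsto (fun k : ℕ => ⟪e (m + k), (Λ ∘L T ∘L Λ) (e (n + k))⟫_ℂ) atTop (𝓝 0) := by
      refine hcpt.tendsto_inner_apply (C := 1) ?_ (fun k => (hnorm _).le) fun y => ?_
      · exact isBounded_iff_forall_norm_le.2 ⟨1, by rintro _ ⟨k, rfl⟩; exact (hnorm _).le⟩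
      · have hinj : Function.Injective fun k : ℕ => m + k := fun a b h => by simpa using h
        simpa [Nat.cofinite_eq_atTop, Function.comp_def] using
          (e.orthonormal.tendsto_inner_cofinite y).comp hinj.tendsto_cofinite
    have hconst : ∀ᶠ k : ℕ in atTop,
        ⟪e (m + k), (Λ ∘L T ∘L Λ) (e (n + k))⟫_ℂ = ⟪e m, T (e n)⟫_ℂ := by
      filter_upwards [eventually_ge_atTop ((1 - m).toNat + (1 - n).toNat)] with k hk
      rw [hΛsa.inner_comp_comp_apply T (by rw [hΛ, if_pos (by omega)])
          (by rw [hΛ, if_pos (by omega)]),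
        inner_apply_add_nat_of_commute (inner_map_map_of_mem_unitary hR) hTR hshift]
    exact tendsto_nhds_unique (tendsto_const_nhds.congr' (EventuallyEq.symm hconst)) hlim
  have hT : T = 0 := e.eq_zero_of_inner_apply_eq_zero e hentry
  rw [← hspec] at hf ⊢
  exact eqOn_of_cfc_eq_cfc (hT.trans (cfc_zero ℂ R).symm) hf
end
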